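/- Let W : ℝ → ℝ be integrable with ∫_ℝ W(x) dx < 0, and let c > 0 and M > 0. For each integer n ≥ 1 define the cutoff φₙ : ℝ → ℝ by φₙ(x) := 1 for |x| ≤ n, φₙ(x) := (2n − |x|)/n for n ≤ |x| ≤ 2n, and φₙ(x) := 0 for |x| ≥ 2n. Then ∫_ℝ |φₙ'(x)|² dx = 2/n (with φₙ' the almost-everywhere derivative), the integrals ∫_ℝ W φₙ² converge to ∫_ℝ W as n → ∞, and consequently there exists n such that M ∫_ℝ |φₙ'|² + c ∫_ℝ W(x) φₙ(x)² dx < 0. -/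

import Mathlib

/-!
Off the four break points, `φₙ'` is `∓1/n` on the two ramps `n < |x| < 2n`, of total length `2n`,
and `0` elsewhere, so `∫ |φₙ'|² = 2n · n⁻² = 2/n`. Since `0 ≤ φₙ ≤ 1` and `φₙ x = 1` once `n ≥ |x|`,
dominated convergence by `|W|` gives `∫ W φₙ² → ∫ W`. Hence `M ∫ |φₙ'|² + c ∫ W φₙ² → c ∫ W < 0`.
-/

open MeasureTheory Filter Topology

/-- The piecewise-linear cutoff `φₙ`: equal to `1` on `[−n, n]`, affinely
interpolating to `0` on `[n, 2n]` and `[−2n, −n]`, and vanishing outside. -/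
noncomputable def cutoff (n : ℕ) : ℝ → ℝ := fun x =>
  if |x| ≤ (n : ℝ) then 1
  else if |x| ≤ 2 * (n : ℝ) then (2 * (n : ℝ) - |x|) / (n : ℝ)
  else 0

open Set

lemma volume_real_abs_mem_Ioo {a b : ℝ} (ha : 0 ≤ a) (hab : a ≤ b) :
    volume.real {x : ℝ | a < |x| ∧ |x| < b} = 2 * (b - a) := by
  have hunion : {x : ℝ | a < |x| ∧ |x| < b} = Ioo (-b) (-a) ∪ Ioo a b := by
    ext x
    simp only [mem_ofPred_eq, mem_union, mem_Ioo, lt_abs, abs_lt]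
    constructor
    · rintro ⟨hx | hx, hxb, hbx⟩
      · exact Or.inr ⟨hx, hbx⟩
      · exact Or.inl ⟨hxb, by linarith⟩
    · rintro (⟨hbx, hxa⟩ | ⟨hax, hxb⟩)
      · exact ⟨Or.inr (by linarith), hbx, by linarith⟩
      · exact ⟨Or.inl hax, by linarith, hxb⟩
  have hdisj : Disjoint (Ioo (-b) (-a)) (Ioo a b) :=
    disjoint_left.mpr fun x hx hx' => by linarith [hx.2, hx'.1]
  rw [hunion, measureReal_union hdisj measurableSet_Ioo measure_Ioo_lt_top.ne measure_Ioo_lt_top.ne,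
    Real.volume_real_Ioo_of_le (by linarith), Real.volume_real_Ioo_of_le hab]
  ring

namespace cutoff

variable {n : ℕ} {x : ℝ}

lemma eq_one (h : |x| ≤ n) : cutoff n x = 1 := if_pos h

lemma eq_zero (h : 2 * (n : ℝ) < |x|) : cutoff n x = 0 := by
  have : ¬ |x| ≤ n := by linarith [n.cast_nonneg (α := ℝ)]
  simp only [cutoff, if_neg this, if_neg h.not_ge]

lemma eq_ramp (h₁ : (n : ℝ) < |x|) (h₂ : |x| ≤ 2 * n) : cutoff n x = (2 * n - |x|) / n := by
  simp only [cutoff, if_neg h₁.not_ge, if_pos h₂]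

lemma mem_Icc (n : ℕ) (x : ℝ) : cutoff n x ∈ Icc 0 1 := by
  unfold cutoff
  split_ifs with h₁ h₂
  · simp
  · have hn : (0 : ℝ) < n := by linarith [not_le.mp h₁]
    exact ⟨div_nonneg (by linarith) hn.le, (div_le_one hn).mpr (by linarith)⟩
  · simp

lemma measurable (n : ℕ) : Measurable (cutoff n) := by
  refine Measurable.ite ?_ measurable_const (Measurable.ite ?_ ?_ measurable_const)
  · exact measurableSet_le measurable_id.abs measurable_const
  · exact measurableSet_le measurable_id.abs measurable_const
  · exact (measurable_const.sub measurable_id.abs).div_const _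

lemma eventually_eq_one (x : ℝ) : ∀ᶠ n : ℕ in atTop, cutoff n x = 1 := by
  filter_upwards [eventually_ge_atTop ⌈|x|⌉₊] with n hn
  exact eq_one ((Nat.le_ceil _).trans (by exact_mod_cast hn))

lemma deriv_of_abs_lt (h : |x| < n) : deriv (cutoff n) x = 0 := by
  have : cutoff n =ᶠ[𝓝 x] fun _ => 1 := by
    filter_upwards [(isOpen_lt continuous_abs continuous_const).mem_nhds h] with y hy
    exact eq_one (le_of_lt hy)
  rw [this.deriv_eq, deriv_const]

lemma deriv_of_lt_abs (h : 2 * (n : ℝ) < |x|) : deriv (cutoff n) x = 0 := by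
  have : cutoff n =ᶠ[𝓝 x] fun _ => 0 := by
    filter_upwards [(isOpen_lt continuous_const continuous_abs).mem_nhds h] with y hy
    exact eq_zero hy
  rw [this.deriv_eq, deriv_const]

lemma hasDerivAt_of_mem_ramp (h₁ : (n : ℝ) < |x|) (h₂ : |x| < 2 * n) :
    HasDerivAt (cutoff n) (-SignType.sign x / n) x := by
  have hx : x ≠ 0 := abs_pos.mp ((Nat.cast_nonneg n).trans_lt h₁)
  have hramp : cutoff n =ᶠ[𝓝 x] fun y => (2 * n - |y|) / n := by
    have hopen : IsOpen {y : ℝ | (n : ℝ) < |y| ∧ |y| < 2 * n} :=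
      (isOpen_lt continuous_const continuous_abs).inter (isOpen_lt continuous_abs continuous_const)
    filter_upwards [hopen.mem_nhds ⟨h₁, h₂⟩] with y hy
    exact eq_ramp hy.1 hy.2.le
  have := ((hasDerivAt_abs hx).const_sub (2 * (n : ℝ))).div_const (n : ℝ)
  exact (this.congr_of_eventuallyEq hramp).congr_deriv (by ring)

lemma sq_deriv_eq_indicator (h₁ : |x| ≠ n) (h₂ : |x| ≠ 2 * n) :
    deriv (cutoff n) x ^ 2 =
      {y : ℝ | n < |y| ∧ |y| < 2 * n}.indicator (fun _ => 1 / (n : ℝ) ^ 2) x := by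
  rcases h₁.lt_or_gt with hlt | hgt
  · simp [deriv_of_abs_lt hlt, hlt.not_gt]
  rcases h₂.lt_or_gt with hlt | hgt'
  · have hx : x ≠ 0 := abs_pos.mp ((Nat.cast_nonneg n).trans_lt hgt)
    have hsign : (SignType.sign x : ℝ) ^ 2 = 1 := by
      rcases hx.lt_or_gt with hneg | hpos
      · simp [sign_neg hneg]
      · simp [sign_pos hpos]
    simp [(hasDerivAt_of_mem_ramp hgt hlt).deriv, hgt, hlt, div_pow, hsign]
  · simp [deriv_of_lt_abs hgt', hgt'.not_gt]

/-- For `n = 0` both sides are `0`, the right one since `2 / 0 = 0` in Lean. -/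
theorem integral_sq_deriv (n : ℕ) : ∫ x, deriv (cutoff n) x ^ 2 = 2 / (n : ℝ) := by
  have hfinite : ({-(2 * (n : ℝ)), -(n : ℝ), (n : ℝ), 2 * (n : ℝ)} : Set ℝ).Countable :=
    (toFinite _).countable
  have hae : (fun x => deriv (cutoff n) x ^ 2)
      =ᵐ[volume] {y : ℝ | n < |y| ∧ |y| < 2 * n}.indicator (fun _ => 1 / (n : ℝ) ^ 2) := by
    filter_upwards [hfinite.ae_notMem volume] with x hx
    simp only [mem_insert_iff, mem_singleton_iff, not_or] at hx
    refine sq_deriv_eq_indicator ?_ ?_ <;>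
      rw [Ne, abs_eq (by positivity)] <;> tauto
  have hmeas : MeasurableSet {y : ℝ | n < |y| ∧ |y| < 2 * n} :=
    (measurableSet_lt measurable_const measurable_id.abs).inter
      (measurableSet_lt measurable_id.abs measurable_const)
  rw [integral_congr_ae hae, integral_indicator_const _ hmeas,
    volume_real_abs_mem_Ioo n.cast_nonneg (by linarith [n.cast_nonneg (α := ℝ)]), smul_eq_mul]
  rcases n.eq_zero_or_pos with rfl | hn
  · simp
  · field_simp
    ring

theorem tendsto_integral_mul_sq {μ : Measure ℝ} {W : ℝ → ℝ} (hW : Integrable W μ) :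
    Tendsto (fun n : ℕ => ∫ x, W x * cutoff n x ^ 2 ∂μ) atTop (𝓝 (∫ x, W x ∂μ)) := by
  refine tendsto_integral_of_dominated_convergence (fun x => ‖W x‖)
    (fun n => hW.aestronglyMeasurable.mul ((measurable n).pow_const 2).aestronglyMeasurable)
    hW.norm (fun n => ae_of_all _ fun x => ?_) (ae_of_all _ fun x => ?_)
  · obtain ⟨h0, h1⟩ := mem_Icc n x
    rw [norm_mul, norm_pow, Real.norm_of_nonneg h0]
    exact mul_le_of_le_one_right (norm_nonneg _) (pow_le_one₀ h0 h1)
  · refine tendsto_const_nhds.congr' ?_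
    filter_upwards [eventually_eq_one x] with n hn
    rw [hn, one_pow, mul_one]

end cutoff

theorem cutoff_variational_general
    (W : ℝ → ℝ) (hW : Integrable W) (hWneg : (∫ x : ℝ, W x) < 0)
    (c M : ℝ) (hc : 0 < c) :
    (∀ n : ℕ, 1 ≤ n →
      (∫ x : ℝ, (deriv (cutoff n) x) ^ 2) = 2 / (n : ℝ)) ∧
    Tendsto (fun n : ℕ => ∫ x : ℝ, W x * (cutoff n x) ^ 2) atTop
      (𝓝 (∫ x : ℝ, W x)) ∧
    ∃ n : ℕ, 1 ≤ n ∧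
      M * (∫ x : ℝ, (deriv (cutoff n) x) ^ 2)
        + c * (∫ x : ℝ, W x * (cutoff n x) ^ 2) < 0 := by
  have hconv := cutoff.tendsto_integral_mul_sq hW
  refine ⟨fun n _ => cutoff.integral_sq_deriv n, hconv, ?_⟩
  have hlim : Tendsto (fun n : ℕ => M * (2 / (n : ℝ)) + c * ∫ x, W x * cutoff n x ^ 2) atTop
      (𝓝 (M * 0 + c * ∫ x, W x)) :=
    ((tendsto_const_div_atTop_nhds_zero_nat 2).const_mul M).add (hconv.const_mul c)
  have hlimit_neg : M * 0 + c * ∫ x, W x < 0 := by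
    rw [mul_zero, zero_add]
    exact mul_neg_of_pos_of_neg hc hWneg
  obtain ⟨n, hn, hneg⟩ := ((eventually_ge_atTop 1).and (hlim.eventually_lt_const hlimit_neg)).exists
  exact ⟨n, hn, by rwa [cutoff.integral_sq_deriv]⟩

/-- the variational computation with the cutoffs `φₙ`:
the kinetic energy of `φₙ` is `2/n`, the integrals `∫ W φₙ²` converge to
`∫ W < 0`, and hence `M ∫|φₙ'|² + c ∫ W φₙ²` is eventually negative. -/
theorem cutoff_variational
    (W : ℝ → ℝ) (hW : Integrable W) (hWneg : (∫ x : ℝ, W x) < 0)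
    (c M : ℝ) (hc : 0 < c) (hM : 0 < M) :
    (∀ n : ℕ, 1 ≤ n →
      (∫ x : ℝ, (deriv (cutoff n) x) ^ 2) = 2 / (n : ℝ)) ∧
    Tendsto (fun n : ℕ => ∫ x : ℝ, W x * (cutoff n x) ^ 2) atTop
      (𝓝 (∫ x : ℝ, W x)) ∧
    ∃ n : ℕ, 1 ≤ n ∧
      M * (∫ x : ℝ, (deriv (cutoff n) x) ^ 2)
        + c * (∫ x : ℝ, W x * (cutoff n x) ^ 2) < 0 :=
  cutoff_variational_general W hW hWneg c M hc
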